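/- arXiv:1309.3756 — 6 statements merged into one kernel-verified Lean document; each statement's English description precedes it below -/
import Mathlib

section
/- For any n×n matrix A, det(A) · det(A with last two rows and last two columns deleted) = det(A with last row and column deleted) · det(A with row n-1 and column n-1 deleted) − det(A with row n-1 and column n deleted) · det(A with row n and column n-1 deleted). -/
/-!
Jacobi's theorem on complementary minors: write `A` in block form for `m ⊕ k` and replace the
last `k` columns of the identity by those of `adj A`. Multiplying `A` by this matrix gives a
block lower-triangular matrix with diagonal blocks `A₁₁` and `det A • 1`, so
`det A * det (adj A)₂₂ = det A ^ |k| * det A₁₁`. For the generic matrix `det A` can be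
cancelled, and the cancelled identity then specializes to every matrix. When `|k| = 2`,
`det (adj A)₂₂` expands into the four `(n-1)`-minors of `A`.
-/

open Matrix

namespace Matrix

variable {m k R : Type*} [Fintype m] [Fintype k] [DecidableEq m] [DecidableEq k] [CommRing R]

theorem mul_fromBlocks_one_adjugate_toBlocks (A : Matrix (m ⊕ k) (m ⊕ k) R) :
    A * fromBlocks 1 A.adjugate.toBlocks₁₂ 0 A.adjugate.toBlocks₂₂ =
      fromBlocks A.toBlocks₁₁ 0 A.toBlocks₂₁ (A.det • 1) := by
  have h := mul_adjugate A
  generalize A.adjugate = B, A.det = d at h ⊢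
  rw [← fromBlocks_toBlocks A] at h ⊢
  rw [← fromBlocks_toBlocks B, ← fromBlocks_one, fromBlocks_smul, fromBlocks_multiply,
    fromBlocks_inj] at h
  simp [fromBlocks_multiply, h.2.1, h.2.2.2]

theorem det_mul_det_toBlocks₂₂_adjugate (A : Matrix (m ⊕ k) (m ⊕ k) R) :
    A.det * A.adjugate.toBlocks₂₂.det = A.det ^ Fintype.card k * A.toBlocks₁₁.det := by
  have h := congrArg det (mul_fromBlocks_one_adjugate_toBlocks A)
  rwa [det_mul, det_fromBlocks_zero₂₁, det_fromBlocks_zero₁₂, det_one, one_mul, det_smul, det_one,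
    mul_one, mul_comm A.toBlocks₁₁.det] at h

theorem det_toBlocks₂₂_adjugate [Nonempty k] (A : Matrix (m ⊕ k) (m ⊕ k) R) :
    A.adjugate.toBlocks₂₂.det = A.det ^ (Fintype.card k - 1) * A.toBlocks₁₁.det := by
  let X := mvPolynomialX (m ⊕ k) (m ⊕ k) ℤ
  suffices X.adjugate.toBlocks₂₂.det = X.det ^ (Fintype.card k - 1) * X.toBlocks₁₁.det by
    let f := MvPolynomial.aeval (R := ℤ) fun p : (m ⊕ k) × (m ⊕ k) ↦ A p.1 p.2
    have hX : f.mapMatrix X = A := mvPolynomialX_mapMatrix_aeval ℤ A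
    have hf := congrArg f this
    rw [map_mul, map_pow, AlgHom.map_det, AlgHom.map_det, AlgHom.map_det] at hf
    rw [← hX, ← AlgHom.map_adjugate]
    exact hf
  apply mul_left_cancel₀ (det_mvPolynomialX_ne_zero (m ⊕ k) ℤ)
  rw [det_mul_det_toBlocks₂₂_adjugate, ← mul_assoc, ← pow_succ',
    Nat.sub_add_cancel Fintype.card_pos]

end Matrix

/-- Desnanot–Jacobi (Dodgson condensation) identity: for an `n × n` matrix (`n ≥ 2`,
here `n = m + 2`), `det A · det A^{n-1,n}_{n-1,n} = det A^{n}_{n} · det A^{n-1}_{n-1}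
− det A^{n-1}_{n} · det A^{n}_{n-1}`, where superscripts/subscripts indicate deleted
rows/columns. -/
theorem desnanot_jacobi {R : Type*} [CommRing R] (m : ℕ)
    (A : Matrix (Fin (m + 2)) (Fin (m + 2)) R) :
    A.det * (A.submatrix (Fin.castLE (by omega) : Fin m → Fin (m + 2))
        (Fin.castLE (by omega) : Fin m → Fin (m + 2))).det =
      (A.submatrix ((⟨m + 1, by omega⟩ : Fin (m + 2)).succAbove)
          ((⟨m + 1, by omega⟩ : Fin (m + 2)).succAbove)).det *
        (A.submatrix ((⟨m, by omega⟩ : Fin (m + 2)).succAbove)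
          ((⟨m, by omega⟩ : Fin (m + 2)).succAbove)).det -
      (A.submatrix ((⟨m, by omega⟩ : Fin (m + 2)).succAbove)
          ((⟨m + 1, by omega⟩ : Fin (m + 2)).succAbove)).det *
        (A.submatrix ((⟨m + 1, by omega⟩ : Fin (m + 2)).succAbove)
          ((⟨m, by omega⟩ : Fin (m + 2)).succAbove)).det := by
  let e : Fin m ⊕ Fin 2 ≃ Fin (m + 2) := finSumFinEquiv
  have h₁₁ : (A.submatrix e e).toBlocks₁₁ =
      A.submatrix (Fin.castLE (by omega)) (Fin.castLE (by omega)) := rfl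
  have h₀ : e (.inr 0) = ⟨m, by omega⟩ := rfl
  have h₁ : e (.inr 1) = ⟨m + 1, by omega⟩ := rfl
  have h := det_toBlocks₂₂_adjugate (A.submatrix e e)
  rw [adjugate_submatrix_equiv_self, det_submatrix_equiv_self, h₁₁, det_fin_two] at h
  simp only [toBlocks₂₂, of_apply, submatrix_apply, h₀, h₁, adjugate_fin_succ_eq_det_submatrix] at h
  norm_num at h
  linear_combination -h
end

section
/- Let w_ν and w_λ satisfy the Riccati–Schrödinger equations −w' + w² = V − E_ν and −w' + w² = V − E_λ respectively on an interval, with E_λ ≠ E_ν and w_ν ≠ w_λ pointwise. Then the Darboux–Bäcklund transform w_λ^{(ν)} = −w_ν + (E_λ − E_ν)/(w_ν − w_λ) satisfies −(w_λ^{(ν)})' + (w_λ^{(ν)})² = V^{(ν)} − E_λ, where V^{(ν)} = V + 2 w_ν'. -/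
/-! With `u = w_ν - w_λ` and `c = E_λ - E_ν`, subtracting the two Riccati equations gives
`u' = u (w_ν + w_λ) - c`. Substituting this into the derivative of `-w_ν + c / u`, the `c² / u²`
terms cancel and what remains is `w_ν' + w_ν² - c`, which the Riccati equation for `w_ν` turns
into `V + 2 w_ν' - E_λ`. -/

theorem HasDerivAt.neg_add_const_div_sub {𝕜 : Type*} [NontriviallyNormedField 𝕜]
    {f g : 𝕜 → 𝕜} {f' g' x : 𝕜} (hf : HasDerivAt f f' x) (hg : HasDerivAt g g' x)
    (hfg : f x ≠ g x) (c : 𝕜) :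
    HasDerivAt (fun t => -f t + c / (f t - g t)) (-f' - c * (f' - g') / (f x - g x) ^ 2) x := by
  have hinv := (hf.fun_sub hg).fun_inv (sub_ne_zero.mpr hfg)
  have hsum := hf.fun_neg.fun_add (hinv.const_mul c)
  simp only [← div_eq_mul_inv] at hsum
  exact hsum.congr_deriv (by ring)

theorem riccati_darboux_transform {K : Type*} [Field K] {f g f' g' V Enu Elam : K}
    (hfg : f ≠ g) (hf : -f' + f ^ 2 = V - Enu) (hg : -g' + g ^ 2 = V - Elam) :
    -(-f' - (Elam - Enu) * (f' - g') / (f - g) ^ 2) + (-f + (Elam - Enu) / (f - g)) ^ 2 =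
      V + 2 * f' - Elam := by
  have hu : f - g ≠ 0 := sub_ne_zero.mpr hfg
  have hu' : f' - g' = (f - g) * (f + g) - (Elam - Enu) := by linear_combination hg - hf
  rw [hu']
  field_simp
  linear_combination (f - g) ^ 2 * hf

theorem darboux_backlund_riccati_general (I : Set ℝ)
    (V wnu wlam : ℝ → ℝ) (Enu Elam : ℝ)
    (hwnu : ContDiff ℝ 1 wnu) (hwlam : ContDiff ℝ 1 wlam)
    (hne : ∀ x ∈ I, wnu x ≠ wlam x)
    (hnu : ∀ x ∈ I, -deriv wnu x + wnu x ^ 2 = V x - Enu)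
    (hlam : ∀ x ∈ I, -deriv wlam x + wlam x ^ 2 = V x - Elam) :
    ∀ x ∈ I,
      -deriv (fun t => -wnu t + (Elam - Enu) / (wnu t - wlam t)) x +
          (-wnu x + (Elam - Enu) / (wnu x - wlam x)) ^ 2 =
        (V x + 2 * deriv wnu x) - Elam := by
  intro x hx
  have hdnu := (hwnu.differentiable one_ne_zero x).hasDerivAt
  have hdlam := (hwlam.differentiable one_ne_zero x).hasDerivAt
  rw [(hdnu.neg_add_const_div_sub hdlam (hne x hx) (Elam - Enu)).deriv]
  exact riccati_darboux_transform (hne x hx) (hnu x hx) (hlam x hx)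

/-- The Darboux–Bäcklund transform `w_lam^{(nu)} = −w_nu + (E_lam − E_nu)/(w_nu − w_lam)`
maps solutions of the Riccati–Schrödinger equation for `V` at energy `E_lam` to solutions
for the transformed potential `V^{(nu)} = V + 2·w_nu'` at the same energy. -/
theorem darboux_backlund_riccati (I : Set ℝ) (hI : IsOpen I)
    (V wnu wlam : ℝ → ℝ) (Enu Elam : ℝ) (hE : Elam ≠ Enu)
    (hwnu : ContDiff ℝ 1 wnu) (hwlam : ContDiff ℝ 1 wlam)
    (hne : ∀ x ∈ I, wnu x ≠ wlam x)
    (hnu : ∀ x ∈ I, -deriv wnu x + wnu x ^ 2 = V x - Enu)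
    (hlam : ∀ x ∈ I, -deriv wlam x + wlam x ^ 2 = V x - Elam) :
    ∀ x ∈ I,
      -deriv (fun t => -wnu t + (Elam - Enu) / (wnu t - wlam t)) x +
          (-wnu x + (Elam - Enu) / (wnu x - wlam x)) ^ 2 =
        (V x + 2 * deriv wnu x) - Elam :=
  darboux_backlund_riccati_general I V wnu wlam Enu Elam hwnu hwlam hne hnu hlam
end

section
/- Let ψ_ν, ψ_λ be nonvanishing solutions of ψ'' + (E − V)ψ = 0 for energies E_ν and E_λ respectively on an interval. Then the function ψ_λ^{(ν)}(x) = W(ψ_ν, ψ_λ | x)/ψ_ν(x) satisfies the Schrödinger equation (ψ_λ^{(ν)})'' + (E_λ − V^{(ν)}) ψ_λ^{(ν)} = 0 with V^{(ν)} = V − 2 (log ψ_ν)''. -/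
/-!
Put `L = ψ_ν'/ψ_ν`. Since `ψ_ν'' = (V - E_ν) ψ_ν`, `L` solves the Riccati equation
`L' = V - E_ν - L²`, and `W(ψ_ν, ψ_λ)/ψ_ν = ψ_λ' - L ψ_λ =: φ`. Differentiating and using both
equations, `φ' = (E_ν - E_λ) ψ_λ - L φ`; differentiating once more,
`φ'' = (E_ν - E_λ - L' + L²) φ = (V - 2L' - E_λ) φ`, by the Riccati equation again.
-/

open Filter Topology

variable {ψ L V : ℝ → ℝ} {x : ℝ}

theorem iteratedDeriv_two_eq_deriv_deriv (f : ℝ → ℝ) : iteratedDeriv 2 f = deriv (deriv f) := by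
  rw [iteratedDeriv_succ, iteratedDeriv_one]

theorem ContDiff.hasDerivAt_deriv_of_schrodinger {E : ℝ} (hψ : ContDiff ℝ 2 ψ)
    (hode : iteratedDeriv 2 ψ x + (E - V x) * ψ x = 0) :
    HasDerivAt (deriv ψ) ((V x - E) * ψ x) x := by
  have hψ' : Differentiable ℝ (deriv ψ) := by
    simpa only [iteratedDeriv_one] using hψ.differentiable_iteratedDeriv 1 (by norm_num)
  rw [iteratedDeriv_two_eq_deriv_deriv] at hode
  exact (hψ' x).hasDerivAt.congr_deriv (by linarith)

theorem hasDerivAt_logDeriv_of_hasDerivAt_deriv {q : ℝ} (hψ : DifferentiableAt ℝ ψ x)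
    (hψ' : HasDerivAt (deriv ψ) (q * ψ x) x) (hx : ψ x ≠ 0) :
    HasDerivAt (fun t => deriv ψ t / ψ t) (q - (deriv ψ x / ψ x) ^ 2) x := by
  refine (hψ'.fun_div hψ.hasDerivAt hx).congr_deriv ?_
  field_simp

theorem hasDerivAt_deriv_sub_mul_of_riccati {a b : ℝ} (hL : HasDerivAt L (a - L x ^ 2) x)
    (hψ : DifferentiableAt ℝ ψ x) (hψ' : HasDerivAt (deriv ψ) (b * ψ x) x) :
    HasDerivAt (fun t => deriv ψ t - L t * ψ t)
      ((b - a) * ψ x - L x * (deriv ψ x - L x * ψ x)) x :=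
  (hψ'.sub (hL.mul hψ.hasDerivAt)).congr_deriv (by ring)

theorem schrodinger_deriv_sub_mul_of_riccati {U : Set ℝ} (hU : IsOpen U) {Enu Elam : ℝ}
    (hL : ∀ t ∈ U, HasDerivAt L (V t - Enu - L t ^ 2) t) (hψ : Differentiable ℝ ψ)
    (hψ' : ∀ t ∈ U, HasDerivAt (deriv ψ) ((V t - Elam) * ψ t) t) (hx : x ∈ U) :
    deriv (deriv fun t => deriv ψ t - L t * ψ t) x +
      (Elam - (V x - 2 * deriv L x)) * (deriv ψ x - L x * ψ x) = 0 := by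
  have hφ : ∀ t ∈ U, HasDerivAt (fun t => deriv ψ t - L t * ψ t)
      ((Enu - Elam) * ψ t - L t * (deriv ψ t - L t * ψ t)) t := fun t ht =>
    (hasDerivAt_deriv_sub_mul_of_riccati (hL t ht) (hψ t) (hψ' t ht)).congr_deriv (by ring)
  have hφ_deriv : deriv (fun t => deriv ψ t - L t * ψ t) =ᶠ[𝓝 x]
      fun t => (Enu - Elam) * ψ t - L t * (deriv ψ t - L t * ψ t) :=
    eventually_of_mem (hU.mem_nhds hx) fun t ht => (hφ t ht).deriv
  have hφ_deriv_deriv :=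
    ((hψ x).hasDerivAt.const_mul (Enu - Elam)).fun_sub ((hL x hx).fun_mul (hφ x hx))
  rw [hφ_deriv.deriv_eq, hφ_deriv_deriv.deriv, (hL x hx).deriv]
  ring

theorem darboux_crum_one_step_general (I : Set ℝ) (hI : IsOpen I)
    (V psinu psilam : ℝ → ℝ) (Enu Elam : ℝ)
    (hnu : ContDiff ℝ 2 psinu) (hlam : ContDiff ℝ 2 psilam)
    (hnu0 : ∀ x ∈ I, psinu x ≠ 0)
    (hodenu : ∀ x ∈ I, iteratedDeriv 2 psinu x + (Enu - V x) * psinu x = 0)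
    (hodelam : ∀ x ∈ I, iteratedDeriv 2 psilam x + (Elam - V x) * psilam x = 0) :
    ∀ x ∈ I,
      iteratedDeriv 2
          (fun t => (psinu t * deriv psilam t - deriv psinu t * psilam t) / psinu t) x +
        (Elam - (V x - 2 * deriv (fun t => deriv psinu t / psinu t) x)) *
          ((psinu x * deriv psilam x - deriv psinu x * psilam x) / psinu x) = 0 := by
  intro x hx
  have hriccati : ∀ t ∈ I, HasDerivAt (fun t => deriv psinu t / psinu t)
      (V t - Enu - (deriv psinu t / psinu t) ^ 2) t := fun t ht =>
    hasDerivAt_logDeriv_of_hasDerivAt_deriv (hnu.differentiable two_ne_zero t)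
      (hnu.hasDerivAt_deriv_of_schrodinger (hodenu t ht)) (hnu0 t ht)
  have hW : (fun t => (psinu t * deriv psilam t - deriv psinu t * psilam t) / psinu t) =ᶠ[𝓝 x]
      fun t => deriv psilam t - deriv psinu t / psinu t * psilam t :=
    eventually_of_mem (hI.mem_nhds hx) fun t ht => by
      field_simp [hnu0 t ht]
  rw [hW.iteratedDeriv_eq, hW.eq_of_nhds, iteratedDeriv_two_eq_deriv_deriv]
  exact schrodinger_deriv_sub_mul_of_riccati hI hriccati (hlam.differentiable two_ne_zero)
    (fun t ht => hlam.hasDerivAt_deriv_of_schrodinger (hodelam t ht)) hx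

/-- Darboux–Crum formula: if `ψ_nu`, `ψ_lam` solve the Schrödinger equation for `V`
at energies `E_nu`, `E_lam`, with `ψ_nu` nonvanishing, then
`ψ_lam^{(nu)} = W(ψ_nu, ψ_lam)/ψ_nu` solves the Schrödinger equation for
`V^{(nu)} = V − 2(log ψ_nu)''` at energy `E_lam`. -/
theorem darboux_crum_one_step (I : Set ℝ) (hI : IsOpen I)
    (V psinu psilam : ℝ → ℝ) (Enu Elam : ℝ)
    (hV : ContinuousOn V I)
    (hnu : ContDiff ℝ 2 psinu) (hlam : ContDiff ℝ 2 psilam)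
    (hnu0 : ∀ x ∈ I, psinu x ≠ 0)
    (hodenu : ∀ x ∈ I, iteratedDeriv 2 psinu x + (Enu - V x) * psinu x = 0)
    (hodelam : ∀ x ∈ I, iteratedDeriv 2 psilam x + (Elam - V x) * psilam x = 0) :
    ∀ x ∈ I,
      iteratedDeriv 2
          (fun t => (psinu t * deriv psilam t - deriv psinu t * psilam t) / psinu t) x +
        (Elam - (V x - 2 * deriv (fun t => deriv psinu t / psinu t) x)) *
          ((psinu x * deriv psilam x - deriv psinu x * psilam x) / psinu x) = 0 :=
  darboux_crum_one_step_general I hI V psinu psilam Enu Elam hnu hlam hnu0 hodenu hodelam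
end

section
/- Suppose there exists a continuously differentiable function w on an interval I satisfying the Riccati inequality −w'(x) + w(x)² ≤ G(x) for all x ∈ I. Then every nontrivial solution of ψ'' − Gψ = 0 on I has at most one zero on I. -/
/-!
With `g = ψ' + w ψ`, Picone's identity `(ψ g)' = g² + (G + w' - w²) ψ²` and the Riccati
inequality make `ψ g` nondecreasing. If `ψ` vanished at `a < b`, then `ψ g` would vanish on
`[a, b]`, so its derivative, and with it `g`, vanishes there; hence `ψ'(a) = g(a) = 0`. By
uniqueness for the Cauchy problem of the first-order system satisfied by `(ψ, ψ')`, `ψ ≡ 0`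
on `I`.
-/

open Set Filter Topology

lemma lipschitzWith_companion (g : ℝ) :
    LipschitzWith (max 1 ‖g‖₊) (fun p : ℝ × ℝ => (p.2, g * p.1)) := by
  have hmul := (lipschitzWith_smul g).comp (LipschitzWith.prod_fst (α := ℝ) (β := ℝ))
  rw [mul_one] at hmul
  exact LipschitzWith.prod_snd.prodMk hmul

section SecondOrderUniqueness

variable {G ψ ψ' : ℝ → ℝ}

theorem eqOn_Icc_zero_of_second_order {a b t₀ : ℝ} (hG : ContinuousOn G (Icc a b))
    (hψ : ∀ t ∈ Icc a b, HasDerivAt ψ (ψ' t) t)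
    (hψ' : ∀ t ∈ Icc a b, HasDerivAt ψ' (G t * ψ t) t)
    (ht₀ : t₀ ∈ Icc a b) (h0 : ψ t₀ = 0) (h0' : ψ' t₀ = 0) : EqOn ψ 0 (Icc a b) := by
  obtain ⟨M, hM⟩ := (isCompact_Icc.image_of_continuousOn hG.nnnorm).bddAbove
  set v : ℝ → ℝ × ℝ → ℝ × ℝ := fun t p => (p.2, G t * p.1)
  have hv : ∀ t ∈ Icc a b, LipschitzOnWith (max 1 M) (v t) univ := fun t ht =>
    ((lipschitzWith_companion (G t)).weaken
      (max_le_max le_rfl (hM ⟨t, ht, rfl⟩))).lipschitzOnWith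
  set f : ℝ → ℝ × ℝ := fun t => (ψ t, ψ' t)
  have hf : ∀ t ∈ Icc a b, HasDerivAt f (v t (f t)) t := fun t ht =>
    (hψ t ht).prodMk (hψ' t ht)
  have hfc : ContinuousOn f (Icc a b) := fun t ht => (hf t ht).continuousAt.continuousWithinAt
  have hzero : ∀ t, HasDerivAt (fun _ => 0) (v t 0) t := fun t =>
    (hasDerivAt_const t (0 : ℝ × ℝ)).congr_deriv (by ext <;> simp [v])
  have hft₀ : f t₀ = 0 := by simp [f, h0, h0']
  have hsubl : Icc a t₀ ⊆ Icc a b := Icc_subset_Icc_right ht₀.2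
  have hsubr : Icc t₀ b ⊆ Icc a b := Icc_subset_Icc_left ht₀.1
  have hleft : EqOn f (fun _ => 0) (Icc a t₀) :=
    ODE_solution_unique_of_mem_Icc_left (fun t ht => hv t (hsubl (Ioc_subset_Icc_self ht)))
      (hfc.mono hsubl) (fun t ht => (hf t (hsubl (Ioc_subset_Icc_self ht))).hasDerivWithinAt)
      (fun _ _ => mem_univ _) continuousOn_const (fun t _ => (hzero t).hasDerivWithinAt)
      (fun _ _ => mem_univ _) hft₀
  have hright : EqOn f (fun _ => 0) (Icc t₀ b) :=
    ODE_solution_unique_of_mem_Icc_right (fun t ht => hv t (hsubr (Ico_subset_Icc_self ht)))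
      (hfc.mono hsubr) (fun t ht => (hf t (hsubr (Ico_subset_Icc_self ht))).hasDerivWithinAt)
      (fun _ _ => mem_univ _) continuousOn_const (fun t _ => (hzero t).hasDerivWithinAt)
      (fun _ _ => mem_univ _) hft₀
  rw [← Icc_union_Icc_eq_Icc ht₀.1 ht₀.2]
  exact fun t ht => congrArg Prod.fst ((hleft.union hright) ht)

end SecondOrderUniqueness

theorem Set.OrdConnected.eqOn_zero_of_second_order {I : Set ℝ} {G ψ ψ' : ℝ → ℝ}
    {t₀ : ℝ} (hI : I.OrdConnected) (hG : ContinuousOn G I)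
    (hψ : ∀ t ∈ I, HasDerivAt ψ (ψ' t) t) (hψ' : ∀ t ∈ I, HasDerivAt ψ' (G t * ψ t) t)
    (ht₀ : t₀ ∈ I) (h0 : ψ t₀ = 0) (h0' : ψ' t₀ = 0) : EqOn ψ 0 I := fun _ ht =>
  have hsub := hI.uIcc_subset ht₀ ht
  eqOn_Icc_zero_of_second_order (hG.mono hsub) (fun s hs => hψ s (hsub hs))
    (fun s hs => hψ' s (hsub hs)) left_mem_uIcc h0 h0' right_mem_uIcc

section Riccati

variable {G w w' ψ ψ' : ℝ → ℝ}

lemma hasDerivAt_picone {x : ℝ} (hψ : HasDerivAt ψ (ψ' x) x)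
    (hψ' : HasDerivAt ψ' (G x * ψ x) x) (hw : HasDerivAt w (w' x) x) :
    HasDerivAt (fun y => ψ y * (ψ' y + w y * ψ y))
      ((ψ' x + w x * ψ x) ^ 2 + (G x + w' x - w x ^ 2) * ψ x ^ 2) x :=
  (hψ.fun_mul (hψ'.fun_add (hw.fun_mul hψ))).congr_deriv (by ring)

theorem deriv_eq_zero_of_riccati_of_two_zeros {a b : ℝ} (hab : a < b)
    (hψ : ∀ x ∈ Icc a b, HasDerivAt ψ (ψ' x) x)
    (hψ' : ∀ x ∈ Icc a b, HasDerivAt ψ' (G x * ψ x) x)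
    (hw : ∀ x ∈ Icc a b, HasDerivAt w (w' x) x)
    (hric : ∀ x ∈ Icc a b, -w' x + w x ^ 2 ≤ G x) (ha : ψ a = 0) (hb : ψ b = 0) :
    ψ' a = 0 := by
  set F := fun y => ψ y * (ψ' y + w y * ψ y)
  set g := fun y => ψ' y + w y * ψ y
  have hF : ∀ x ∈ Icc a b, HasDerivAt F (g x ^ 2 + (G x + w' x - w x ^ 2) * ψ x ^ 2) x :=
    fun x hx => hasDerivAt_picone (hψ x hx) (hψ' x hx) (hw x hx)
  have hrem : ∀ x ∈ Icc a b, 0 ≤ (G x + w' x - w x ^ 2) * ψ x ^ 2 := fun x hx =>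
    mul_nonneg (by linarith [hric x hx]) (sq_nonneg _)
  have hFmono : MonotoneOn F (Icc a b) :=
    monotoneOn_of_hasDerivWithinAt_nonneg (convex_Icc a b)
      (fun x hx => (hF x hx).continuousAt.continuousWithinAt)
      (fun x hx => (hF x (interior_subset hx)).hasDerivWithinAt)
      (fun x hx => add_nonneg (sq_nonneg _) (hrem x (interior_subset hx)))
  have hFzero : EqOn F 0 (Icc a b) := fun x hx => le_antisymm
    (by simpa [F, hb] using hFmono hx (right_mem_Icc.2 hab.le) hx.2)
    (by simpa [F, ha] using hFmono (left_mem_Icc.2 hab.le) hx hx.1)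
  have hgzero : EqOn g 0 (Ioo a b) := by
    intro x hx
    have hFx : F =ᶠ[𝓝 x] fun _ => 0 :=
      eventually_of_mem (Ioo_mem_nhds hx.1 hx.2) fun y hy => hFzero (Ioo_subset_Icc_self hy)
    have hx' := Ioo_subset_Icc_self hx
    have hF'x := (hF x hx').unique ((hasDerivAt_const x 0).congr_of_eventuallyEq hFx)
    exact pow_eq_zero_iff two_ne_zero |>.1 (by linarith [sq_nonneg (g x), hrem x hx'])
  have hgc : ContinuousOn g (Icc a b) := fun x hx =>
    ((hψ' x hx).continuousAt.add
      ((hw x hx).continuousAt.mul (hψ x hx).continuousAt)).continuousWithinAt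
  have hga := hgzero.of_subset_closure hgc continuousOn_const Ioo_subset_Icc_self
    (closure_Ioo hab.ne).ge (left_mem_Icc.2 hab.le)
  simpa [g, ha] using hga

end Riccati

/-- Disconjugacy criterion: if the Riccati inequality `−w' + w² ≤ G` has a `C¹`
solution on an interval `I`, then every nontrivial solution of `ψ'' − Gψ = 0` on `I`
has at most one zero in `I`. -/
theorem disconjugacy_of_riccati_subsolution (I : Set ℝ) (hI : I.OrdConnected)
    (G w : ℝ → ℝ) (hG : ContinuousOn G I) (hw : ContDiff ℝ 1 w)
    (hric : ∀ x ∈ I, -deriv w x + w x ^ 2 ≤ G x)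
    (psi : ℝ → ℝ) (hpsi : ContDiff ℝ 2 psi)
    (hode : ∀ x ∈ I, iteratedDeriv 2 psi x - G x * psi x = 0)
    (hnontriv : ∃ x ∈ I, psi x ≠ 0) :
    Set.Subsingleton {x ∈ I | psi x = 0} := by
  have hψ : ∀ x, HasDerivAt psi (deriv psi x) x := fun x =>
    (hpsi.differentiable (by norm_num) x).hasDerivAt
  have hψ' : ∀ x ∈ I, HasDerivAt (deriv psi) (G x * psi x) x := fun x hx => by
    have := (hpsi.differentiable_iteratedDeriv 1 (by norm_num) x).hasDerivAt
    rw [← iteratedDeriv_succ, iteratedDeriv_one] at this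
    exact this.congr_deriv (by linarith [hode x hx])
  have hw' : ∀ x, HasDerivAt w (deriv w x) x := fun x =>
    (hw.differentiable one_ne_zero x).hasDerivAt
  intro a ⟨ha, hψa⟩ b ⟨hb, hψb⟩
  by_contra hne
  wlog hab : a < b generalizing a b
  · exact this hb hψb ha hψa (Ne.symm hne) ((Ne.lt_or_gt hne).resolve_left hab)
  have hsub := hI.out ha hb
  have hψ'a : deriv psi a = 0 :=
    deriv_eq_zero_of_riccati_of_two_zeros hab (fun x _ => hψ x)
      (fun x hx => hψ' x (hsub hx)) (fun x _ => hw' x) (fun x hx => hric x (hsub hx)) hψa hψb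
  obtain ⟨c, hc, hψc⟩ := hnontriv
  exact hψc (hI.eqOn_zero_of_second_order hG (fun x _ => hψ x) hψ' ha hψa hψ'a hc)
end

section
/- For the Hermite polynomials Hₙ and any nonnegative integers n, k, the k-th derivative with respect to x of the function exp(x²)·Hₙ(ix) equals i^{−k}·exp(x²)·H_{n+k}(ix), where Hₙ(ix) is interpreted via the polynomial Hₙ evaluated at the purely imaginary argument ix. -/
/-!
Write `fₙ(t) = exp(t²) Hₙ(it)`. By the product and chain rules,
`fₙ' = exp(t²) (2t Hₙ(it) + i Hₙ'(it))`, and the recurrence `H_{n+1} = 2X Hₙ − Hₙ'` evaluated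
at `it` turns the bracket into `i⁻¹ H_{n+1}(it)`. Hence `fₙ' = i⁻¹ f_{n+1}`, and iterating
`k` times gives the claim.
-/

open Complex Polynomial

/-- The physicists' Hermite polynomials, via the recurrence
`H₀ = 1`, `H_{n+1}(x) = 2x·Hₙ(x) − Hₙ'(x)` (equivalent to the Rodrigues formula
`Hₙ(x) = (−1)ⁿ exp(x²) dⁿ/dxⁿ exp(−x²)`). -/
noncomputable def physHermite : ℕ → Polynomial ℤ
  | 0 => 1
  | n + 1 => 2 * Polynomial.X * physHermite n - Polynomial.derivative (physHermite n)

theorem aeval_physHermite_succ {A : Type*} [CommRing A] (z : A) (n : ℕ) :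
    aeval z (physHermite (n + 1)) =
      2 * z * aeval z (physHermite n) - aeval z (derivative (physHermite n)) := by
  simp only [physHermite, map_sub, map_mul, map_ofNat, aeval_X]

theorem hasDerivAt_aeval_mul_ofReal {R : Type*} [CommSemiring R] [Algebra R ℂ] (P : R[X])
    (c : ℂ) (x : ℝ) :
    HasDerivAt (fun t : ℝ => aeval (c * t) P) (c * aeval (c * x) (derivative P)) x := by
  have h := ((P.hasDerivAt_aeval (c * x)).comp (x : ℂ)
    ((hasDerivAt_id (x : ℂ)).const_mul c)).comp_ofReal
  simpa [Function.comp_def, mul_comm] using h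

theorem hasDerivAt_exp_sq_mul_aeval_mul_ofReal {R : Type*} [CommSemiring R] [Algebra R ℂ]
    (P : R[X]) (c : ℂ) (x : ℝ) :
    HasDerivAt (fun t : ℝ => exp ((t : ℂ) ^ 2) * aeval (c * t) P)
      (exp ((x : ℂ) ^ 2) * (2 * x * aeval (c * x) P + c * aeval (c * x) (derivative P))) x := by
  have hexp : HasDerivAt (fun t : ℝ => exp ((t : ℂ) ^ 2)) (exp ((x : ℂ) ^ 2) * (2 * x)) x := by
    simpa using ((hasDerivAt_pow 2 (x : ℂ)).cexp).comp_ofReal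
  exact (hexp.mul (hasDerivAt_aeval_mul_ofReal P c x)).congr_deriv (by ring)

theorem deriv_exp_sq_mul_aeval_I_mul_physHermite (n : ℕ) :
    deriv (fun t : ℝ => exp ((t : ℂ) ^ 2) * aeval (I * t) (physHermite n)) =
      fun x : ℝ => I⁻¹ * (exp ((x : ℂ) ^ 2) * aeval (I * x) (physHermite (n + 1))) := by
  funext x
  rw [(hasDerivAt_exp_sq_mul_aeval_mul_ofReal (physHermite n) I x).deriv, aeval_physHermite_succ,
    inv_I]
  linear_combination 2 * x * exp ((x : ℂ) ^ 2) * aeval (I * x) (physHermite n) * I_sq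

/-- `dᵏ/dxᵏ (exp(x²)·Hₙ(ix)) = i^{−k}·exp(x²)·H_{n+k}(ix)` as complex-valued functions
of the real variable `x`. -/
theorem iteratedDeriv_exp_sq_hermite_imaginary (n k : ℕ) (x : ℝ) :
    iteratedDeriv k
        (fun t : ℝ => Complex.exp ((t : ℂ) ^ 2) *
          Polynomial.aeval (Complex.I * (t : ℂ)) (physHermite n)) x =
      Complex.I ^ (-(k : ℤ)) * Complex.exp ((x : ℂ) ^ 2) *
        Polynomial.aeval (Complex.I * (x : ℂ)) (physHermite (n + k)) := by
  induction k generalizing n with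
  | zero => simp
  | succ k ih =>
    rw [iteratedDeriv_succ', deriv_exp_sq_mul_aeval_I_mul_physHermite,
      iteratedDeriv_const_mul_field, ih (n + 1), add_right_comm n 1 k, ← add_assoc,
      Nat.cast_succ, neg_add, zpow_add₀ I_ne_zero, zpow_neg_one]
    ring
end

section
/- Let α > 1/2 and n ≥ 1 with n < α + 1. Then the function ψ_{−n}(x) = x^{−α+1/2} e^{ωx²/4} Lₙ₋₁^{−α}(−ωx²/2) satisfies the Schrödinger equation for the isotonic oscillator V(x) = (ω²/4)x² + (α+1/2)(α−1/2)/x² − ω(α+1) with eigenvalue −2nω on (0,∞). -/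
/-!
The substitution `ψ(t) = t^(α+1/2) e^(-ωt²/4) L(ωt²/2)` turns the Laguerre equation
`z L'' + (α + 1 - z) L' + λ L = 0` into the Schrödinger equation of the isotonic oscillator with
energy `2λω`, for all real `α`, `ω`, `λ`; for `L = Lₘ^α` and `λ = m` this is the bound state `ψₘ`.
Under `(ω, α) ↦ (-ω, -α)` the potential only shifts by the constant `2ω`, so `L_{n-1}^{-α}`
yields `ψ_{-n}` with energy `-2(n-1)ω - 2ω = -2nω`.
-/

/-- The generalized Laguerre polynomial `Lₙ^α(z) = ∑_{k=0}^n (−1)^k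
(α+k+1)(α+k+2)⋯(α+n) / ((n−k)! k!) · z^k`, with real parameter `α`. -/
noncomputable def genLaguerre (n : ℕ) (α : ℝ) (z : ℝ) : ℝ :=
  ∑ k ∈ Finset.range (n + 1),
    (-1) ^ k * (∏ j ∈ Finset.range (n - k), (α + k + 1 + j)) /
      ((n - k).factorial * k.factorial) * z ^ k

noncomputable def genLaguerreCoeff (m : ℕ) (γ : ℝ) (k : ℕ) : ℝ :=
  (-1) ^ k * (∏ j ∈ Finset.range (m - k), (γ + k + 1 + j)) /
      ((m - k).factorial * k.factorial)

noncomputable def genLaguerreDeriv (m : ℕ) (γ : ℝ) (z : ℝ) : ℝ :=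
  ∑ k ∈ Finset.range (m + 1), genLaguerreCoeff m γ k * (k * z ^ (k - 1))

noncomputable def genLaguerreDeriv2 (m : ℕ) (γ : ℝ) (z : ℝ) : ℝ :=
  ∑ k ∈ Finset.range (m + 1),
    genLaguerreCoeff m γ k * (k * ((k - 1 : ℕ) * z ^ (k - 1 - 1)))

section Laguerre

variable (m : ℕ) (γ : ℝ)

theorem genLaguerre_eq_sum (z : ℝ) :
    genLaguerre m γ z = ∑ k ∈ Finset.range (m + 1), genLaguerreCoeff m γ k * z ^ k :=
  rfl

theorem hasDerivAt_genLaguerre (z : ℝ) :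
    HasDerivAt (genLaguerre m γ) (genLaguerreDeriv m γ z) z :=
  HasDerivAt.fun_sum fun k _ => (hasDerivAt_pow k z).const_mul _

theorem hasDerivAt_genLaguerreDeriv (z : ℝ) :
    HasDerivAt (genLaguerreDeriv m γ) (genLaguerreDeriv2 m γ z) z :=
  HasDerivAt.fun_sum fun k _ => by
    simpa only [mul_assoc] using
      (hasDerivAt_pow (k - 1) z).const_mul (genLaguerreCoeff m γ k * k)

theorem genLaguerreCoeff_recurrence {k : ℕ} (hk : k < m) :
    genLaguerreCoeff m γ (k + 1) * ((k + 1) * (γ + k + 1)) +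
      genLaguerreCoeff m γ k * (m - k) = 0 := by
  obtain ⟨d, rfl⟩ : ∃ d, m = k + d + 1 := ⟨m - k - 1, by omega⟩
  have hprod : ∏ j ∈ Finset.range (d + 1), (γ + k + 1 + j) =
      (∏ j ∈ Finset.range d, (γ + (k + 1 : ℕ) + 1 + j)) * (γ + k + 1) := by
    rw [Finset.prod_range_succ']
    push_cast
    ring_nf
  rw [genLaguerreCoeff, genLaguerreCoeff, show k + d + 1 - (k + 1) = d by omega,
    show k + d + 1 - k = d + 1 by omega, hprod, Nat.factorial_succ d, Nat.factorial_succ k]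
  have hd_fac : (d.factorial : ℝ) ≠ 0 := by positivity
  have hk_fac : (k.factorial : ℝ) ≠ 0 := by positivity
  push_cast
  field_simp
  ring

theorem laguerre_operator_pow (k : ℕ) (z : ℝ) :
    z * (k * ((k - 1 : ℕ) * z ^ (k - 1 - 1))) + (γ + 1 - z) * (k * z ^ (k - 1)) =
      k * (γ + k) * z ^ (k - 1) - k * z ^ k := by
  rcases k with _ | _ | j
  · simp
  · simp
  · simp only [Nat.add_sub_cancel, Nat.cast_add, Nat.cast_one]
    ring

theorem genLaguerre_ode (z : ℝ) :
    z * genLaguerreDeriv2 m γ z + (γ + 1 - z) * genLaguerreDeriv m γ z +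
      m * genLaguerre m γ z = 0 := by
  set c := genLaguerreCoeff m γ
  have hterm : ∀ k : ℕ,
      z * (c k * (k * ((k - 1 : ℕ) * z ^ (k - 1 - 1)))) + (γ + 1 - z) * (c k * (k * z ^ (k - 1)))
        + m * (c k * z ^ k) = c k * (k * (γ + k)) * z ^ (k - 1) + c k * (m - k) * z ^ k := by
    intro k
    linear_combination c k * laguerre_operator_pow γ k z
  have hshift : ∑ k ∈ Finset.range (m + 1), c k * (k * (γ + k)) * z ^ (k - 1) =
      ∑ k ∈ Finset.range m, c (k + 1) * ((k + 1) * (γ + k + 1)) * z ^ k := by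
    rw [Finset.sum_range_succ']
    simp only [Nat.cast_zero, zero_mul, mul_zero, add_zero, Nat.add_sub_cancel]
    refine Finset.sum_congr rfl fun k _ => ?_
    push_cast
    ring
  have htop : ∑ k ∈ Finset.range (m + 1), c k * (m - k) * z ^ k =
      ∑ k ∈ Finset.range m, c k * (m - k) * z ^ k := by
    simp [Finset.sum_range_succ]
  rw [genLaguerreDeriv2, genLaguerreDeriv, genLaguerre_eq_sum, Finset.mul_sum, Finset.mul_sum,
    Finset.mul_sum, ← Finset.sum_add_distrib, ← Finset.sum_add_distrib,
    Finset.sum_congr rfl fun k _ => hterm k, Finset.sum_add_distrib, hshift, htop,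
    ← Finset.sum_add_distrib]
  refine Finset.sum_eq_zero fun k hk => ?_
  linear_combination z ^ k * genLaguerreCoeff_recurrence m γ (Finset.mem_range.mp hk)

end Laguerre

section Oscillator

variable (α ω : ℝ)

theorem hasDerivAt_rpow_mul_exp {t : ℝ} (ht : 0 < t) :
    HasDerivAt (fun t : ℝ => t ^ (α + 1 / 2) * Real.exp (-(ω * t ^ 2 / 4)))
      (((α + 1 / 2) / t - ω * t / 2) * (t ^ (α + 1 / 2) * Real.exp (-(ω * t ^ 2 / 4)))) t := by
  have hexp : HasDerivAt (fun t : ℝ => Real.exp (-(ω * t ^ 2 / 4)))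
      (Real.exp (-(ω * t ^ 2 / 4)) * -(ω * (2 * t) / 4)) t := by
    simpa using (((hasDerivAt_pow 2 t).const_mul ω).div_const 4).neg.exp
  refine ((Real.hasDerivAt_rpow_const (p := α + 1 / 2) (Or.inl ht.ne')).mul hexp).congr_deriv ?_
  rw [Real.rpow_sub_one ht.ne']
  field_simp
  ring

theorem hasDerivAt_mul_sq_div_two (t : ℝ) :
    HasDerivAt (fun t : ℝ => ω * t ^ 2 / 2) (ω * t) t := by
  refine (((hasDerivAt_pow 2 t).const_mul ω).div_const 2).congr_deriv ?_
  push_cast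
  ring

theorem isotonic_schrodinger_of_laguerre_ode {L L' L'' : ℝ → ℝ}
    (hL : ∀ z, HasDerivAt L (L' z) z) (hL' : ∀ z, HasDerivAt L' (L'' z) z) (l : ℝ)
    (hode : ∀ z, z * L'' z + (α + 1 - z) * L' z + l * L z = 0) {x : ℝ} (hx : 0 < x) :
    -iteratedDeriv 2
        (fun t : ℝ => t ^ (α + 1 / 2) * Real.exp (-(ω * t ^ 2 / 4)) * L (ω * t ^ 2 / 2)) x +
      (ω ^ 2 / 4 * x ^ 2 + (α + 1 / 2) * (α - 1 / 2) / x ^ 2 - ω * (α + 1)) *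
        (x ^ (α + 1 / 2) * Real.exp (-(ω * x ^ 2 / 4)) * L (ω * x ^ 2 / 2)) =
      2 * l * ω * (x ^ (α + 1 / 2) * Real.exp (-(ω * x ^ 2 / 4)) * L (ω * x ^ 2 / 2)) := by
  set q := fun t : ℝ => (α + 1 / 2) / t - ω * t / 2
  set P := fun t : ℝ => q t * L (ω * t ^ 2 / 2) + ω * t * L' (ω * t ^ 2 / 2)
  have hq : HasDerivAt q (-((α + 1 / 2) / x ^ 2) - ω / 2) x := by
    refine (((hasDerivAt_const x (α + 1 / 2)).div (hasDerivAt_id' x) hx.ne').sub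
      (((hasDerivAt_id' x).const_mul ω).div_const 2)).congr_deriv ?_
    ring
  have hP : HasDerivAt P
      ((-((α + 1 / 2) / x ^ 2) - ω / 2) * L (ω * x ^ 2 / 2)
        + q x * (L' (ω * x ^ 2 / 2) * (ω * x))
        + (ω * L' (ω * x ^ 2 / 2) + ω * x * (L'' (ω * x ^ 2 / 2) * (ω * x)))) x := by
    have hs := hasDerivAt_mul_sq_div_two ω x
    exact (hq.mul ((hL _).comp x hs)).add
      ((((hasDerivAt_id x).const_mul ω).congr_deriv (mul_one ω)).mul ((hL' _).comp x hs))
  have hψ' : ∀ t > 0, HasDerivAt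
      (fun t : ℝ => t ^ (α + 1 / 2) * Real.exp (-(ω * t ^ 2 / 4)) * L (ω * t ^ 2 / 2))
      (t ^ (α + 1 / 2) * Real.exp (-(ω * t ^ 2 / 4)) * P t) t := by
    intro t ht
    refine ((hasDerivAt_rpow_mul_exp α ω ht).mul
      ((hL _).comp t (hasDerivAt_mul_sq_div_two ω t))).congr_deriv ?_
    simp only [P, q, Function.comp_apply]
    ring
  have hψ'' := ((hasDerivAt_rpow_mul_exp α ω hx).fun_mul hP).deriv
  rw [iteratedDeriv_eq_iterate, Function.iterate_succ_apply, Function.iterate_one,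
    (Filter.eventuallyEq_of_mem (Ioi_mem_nhds hx) fun t ht => (hψ' t ht).deriv).deriv_eq, hψ'']
  have hodex := hode (ω * x ^ 2 / 2)
  simp only [P, q]
  generalize L (ω * x ^ 2 / 2) = a, L' (ω * x ^ 2 / 2) = b, L'' (ω * x ^ 2 / 2) = c at hodex ⊢
  field_simp
  -- `ψ''` is the weight times `(V - 2lω) L` plus `2ω` times the Laguerre equation at `ωx²/2`
  linear_combination -32 * x ^ 2 * ω * hodex

end Oscillator

theorem type3_seed_isotonic_oscillator_general (n : ℕ) (hn : 1 ≤ n) (α ω : ℝ) :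
    ∀ x ∈ Set.Ioi (0 : ℝ),
      -iteratedDeriv 2
          (fun t : ℝ => t ^ (-α + 1 / 2) * Real.exp (ω * t ^ 2 / 4) *
            genLaguerre (n - 1) (-α) (-(ω * t ^ 2 / 2))) x +
        (ω ^ 2 / 4 * x ^ 2 + (α + 1 / 2) * (α - 1 / 2) / x ^ 2 - ω * (α + 1)) *
          (x ^ (-α + 1 / 2) * Real.exp (ω * x ^ 2 / 4) *
            genLaguerre (n - 1) (-α) (-(ω * x ^ 2 / 2))) =
      -2 * (n : ℝ) * ω *
        (x ^ (-α + 1 / 2) * Real.exp (ω * x ^ 2 / 4) *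
          genLaguerre (n - 1) (-α) (-(ω * x ^ 2 / 2))) := by
  intro x hx
  have h := isotonic_schrodinger_of_laguerre_ode (-α) (-ω)
    (hasDerivAt_genLaguerre (n - 1) (-α)) (hasDerivAt_genLaguerreDeriv (n - 1) (-α)) _
    (genLaguerre_ode (n - 1) (-α)) hx
  simp only [neg_mul, neg_div, neg_neg] at h
  rw [Nat.cast_sub hn, Nat.cast_one] at h
  linear_combination h

/-- For `α > 1/2`, `1 ≤ n < α + 1` and `ω > 0`, the function
`ψ_{−n}(x) = x^{−α+1/2} e^{ωx²/4} L_{n−1}^{−α}(−ωx²/2)` satisfies the Schrödinger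
equation for the isotonic oscillator
`V(x) = (ω²/4)x² + (α+1/2)(α−1/2)/x² − ω(α+1)` with eigenvalue `−2nω` on `(0,∞)`. -/
theorem type3_seed_isotonic_oscillator (n : ℕ) (hn : 1 ≤ n) (α ω : ℝ)
    (hα : 1 / 2 < α) (hnα : (n : ℝ) < α + 1) (hω : 0 < ω) :
    ∀ x ∈ Set.Ioi (0 : ℝ),
      -iteratedDeriv 2
          (fun t : ℝ => t ^ (-α + 1 / 2) * Real.exp (ω * t ^ 2 / 4) *
            genLaguerre (n - 1) (-α) (-(ω * t ^ 2 / 2))) x +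
        (ω ^ 2 / 4 * x ^ 2 + (α + 1 / 2) * (α - 1 / 2) / x ^ 2 - ω * (α + 1)) *
          (x ^ (-α + 1 / 2) * Real.exp (ω * x ^ 2 / 4) *
            genLaguerre (n - 1) (-α) (-(ω * x ^ 2 / 2))) =
      -2 * (n : ℝ) * ω *
        (x ^ (-α + 1 / 2) * Real.exp (ω * x ^ 2 / 4) *
          genLaguerre (n - 1) (-α) (-(ω * x ^ 2 / 2))) :=
  type3_seed_isotonic_oscillator_general n hn α ω
end
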